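/- arXiv:1304.0985 — 3 statements merged into one kernel-verified Lean document; each statement's English description precedes it below -/
import Mathlib

section
/- Let μ : (0,∞) → [0,∞) be nonnull, nonincreasing, continuous, and integrable. Then for every real λ, the Fourier transform μ̂(λ) = ∫₀^∞ μ(s)e^{−iλs} ds is nonzero. -/
/-!
For `λ > 0` put `T = π / λ`. Splitting `sin (λ s)` into its positive and negative parts and
translating the negative half-waves by `T` gives
`∫₀^∞ μ(s) sin(λs) ds = ∫₀^∞ (μ(s) - μ(s + T)) max (sin (λs)) 0 ds`,
whose integrand is nonnegative since `μ` is nonincreasing. If it vanished identically, then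
`μ(s) = μ(s + T)` wherever `sin (λs) > 0`, hence by continuity at every multiple of `T`; so `μ`
would be constant on `[T, ∞)`, zero there by integrability, and then zero on `(0, T)` as well.
Hence the sine transform, which is minus the imaginary part of `μ̂(λ)`, is nonzero for `λ ≠ 0`,
while `μ̂(0) = ∫ μ > 0`. (The real part is of no use: the cosine transform of such a `μ` can be
negative.)
-/

open MeasureTheory Complex Set Real

theorem setIntegral_Ioi_comp_add_right {E : Type*} [NormedAddCommGroup E] [NormedSpace ℝ E]
    (g : ℝ → E) (a T : ℝ) : ∫ x in Ioi a, g (x + T) = ∫ x in Ioi (a + T), g x := by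
  simpa [preimage_add_const_Ioi] using
    (measurePreserving_add_right volume T).setIntegral_preimage_emb
      (MeasurableEquiv.addRight T).measurableEmbedding g (Ioi (a + T))

theorem MeasureTheory.IntegrableOn.comp_add_right_Ioi {E : Type*} [NormedAddCommGroup E]
    {g : ℝ → E} {a T : ℝ} (hg : IntegrableOn g (Ioi a)) (hT : 0 ≤ T) :
    IntegrableOn (fun x => g (x + T)) (Ioi a) := by
  simpa [preimage_add_const_Ioi, Function.comp_def] using
    ((measurePreserving_add_right volume T).integrableOn_comp_preimage
      (MeasurableEquiv.addRight T).measurableEmbedding).2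
      (hg.mono_set (Ioi_subset_Ioi (le_add_of_nonneg_right hT)))

theorem MeasureTheory.IntegrableOn.mul_of_norm_le_one {𝕜 : Type*} [NormedRing 𝕜] {f φ : ℝ → 𝕜}
    {s : Set ℝ} (hf : IntegrableOn f s) (hφ : Continuous φ) (hφ1 : ∀ x, ‖φ x‖ ≤ 1) :
    IntegrableOn (fun x => f x * φ x) s :=
  Integrable.mul_bdd hf hφ.aestronglyMeasurable (ae_of_all _ hφ1)

theorem setIntegral_pos_of_continuousAt {X : Type*} [TopologicalSpace X] [MeasurableSpace X]
    [OpensMeasurableSpace X] {μ : Measure X} [μ.IsOpenPosMeasure] {f : X → ℝ} {s : Set X}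
    (hs : IsOpen s) (hf : IntegrableOn f s μ) (hnn : ∀ x ∈ s, 0 ≤ f x) {x : X} (hx : x ∈ s)
    (hcont : ContinuousAt f x) (hfx : 0 < f x) : 0 < ∫ y in s, f y ∂μ := by
  rw [setIntegral_pos_iff_support_of_nonneg_ae (ae_restrict_of_forall_mem hs.measurableSet hnn) hf]
  exact μ.measure_pos_of_mem_nhds <| Filter.inter_mem
    ((hcont.eventually (eventually_gt_nhds hfx)).mono fun _ h => h.ne') (hs.mem_nhds hx)

theorem abs_max_sin_zero_le_one (x : ℝ) : |max (Real.sin x) 0| ≤ 1 := by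
  rw [abs_of_nonneg (le_max_right _ _)]
  exact max_le (Real.sin_le_one x) zero_le_one

section HalfPeriod

variable {lam : ℝ}

theorem sin_mul_add_pi_div (hlam : 0 < lam) (s : ℝ) :
    Real.sin (lam * (s + π / lam)) = -Real.sin (lam * s) := by
  rw [mul_add, mul_div_cancel₀ _ hlam.ne', Real.sin_add_pi]

theorem sin_mul_pos_of_mem_Ioo (hlam : 0 < lam) (k : ℕ) {s : ℝ}
    (hs : s ∈ Ioo (2 * k * (π / lam)) (2 * k * (π / lam) + π / lam)) :
    0 < Real.sin (lam * s) := by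
  have h1 := mul_lt_mul_of_pos_left hs.1 hlam
  have h2 := mul_lt_mul_of_pos_left hs.2 hlam
  rw [show lam * (2 * k * (π / lam)) = 2 * k * π by field_simp] at h1
  rw [show lam * (2 * k * (π / lam) + π / lam) = 2 * k * π + π by field_simp] at h2
  rw [← Real.sin_sub_nat_mul_two_pi _ k]
  exact Real.sin_pos_of_pos_of_lt_pi (by linarith) (by linarith)

theorem sin_mul_nonneg_of_mem_Ioc (hlam : 0 < lam) {s : ℝ} (hs : s ∈ Ioc 0 (π / lam)) :
    0 ≤ Real.sin (lam * s) := by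
  have h2 := mul_le_mul_of_nonneg_left hs.2 hlam.le
  rw [mul_div_cancel₀ _ hlam.ne'] at h2
  exact Real.sin_nonneg_of_nonneg_of_le_pi (mul_pos hlam hs.1).le h2

end HalfPeriod

theorem integral_Ioi_mul_sin_eq {f : ℝ → ℝ} (hf : IntegrableOn f (Ioi 0)) {lam : ℝ}
    (hlam : 0 < lam) :
    ∫ s in Ioi 0, f s * Real.sin (lam * s) =
      ∫ s in Ioi 0, (f s - f (s + π / lam)) * max (Real.sin (lam * s)) 0 := by
  set T := π / lam with hT_def
  have hT : 0 < T := div_pos pi_pos hlam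
  have hpos_bdd : ∀ x, |max (Real.sin (lam * x)) 0| ≤ 1 := fun x => abs_max_sin_zero_le_one _
  have hneg_bdd : ∀ x, |max (-Real.sin (lam * x)) 0| ≤ 1 := fun x => by
    simpa [Real.sin_neg] using abs_max_sin_zero_le_one (-(lam * x))
  have hpos_int := hf.mul_of_norm_le_one (by fun_prop) hpos_bdd
  have hneg_int := hf.mul_of_norm_le_one (by fun_prop) hneg_bdd
  have hshift_int := (hf.comp_add_right_Ioi hT.le).mul_of_norm_le_one (by fun_prop) hpos_bdd
  -- the negative half-waves of `sin (lam * s)` are the positive ones translated by `T`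
  have hneg : ∫ s in Ioi 0, f s * max (-Real.sin (lam * s)) 0 =
      ∫ s in Ioi 0, f (s + T) * max (Real.sin (lam * s)) 0 := calc
    _ = ∫ s in Ioi (0 + T), f s * max (-Real.sin (lam * s)) 0 := by
      refine setIntegral_eq_of_subset_of_forall_sdiff_eq_zero measurableSet_Ioi
        (Ioi_subset_Ioi (by linarith)) fun x hx => ?_
      have := sin_mul_nonneg_of_mem_Ioc hlam ⟨hx.1, by simpa using hx.2⟩
      simp [this]
    _ = ∫ s in Ioi 0, f (s + T) * max (-Real.sin (lam * (s + T))) 0 :=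
      (setIntegral_Ioi_comp_add_right (fun s => f s * max (-Real.sin (lam * s)) 0) 0 T).symm
    _ = _ := by simp only [hT_def, sin_mul_add_pi_div hlam, neg_neg]
  calc ∫ s in Ioi 0, f s * Real.sin (lam * s)
      = ∫ s in Ioi 0, (f s * max (Real.sin (lam * s)) 0 - f s * max (-Real.sin (lam * s)) 0) := by
        simp only [← mul_sub, max_zero_sub_max_neg_zero_eq_self]
    _ = (∫ s in Ioi 0, f s * max (Real.sin (lam * s)) 0) -
          ∫ s in Ioi 0, f (s + T) * max (Real.sin (lam * s)) 0 := by
        rw [integral_sub hpos_int hneg_int, hneg]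
    _ = _ := by
        rw [← integral_sub hpos_int hshift_int]
        simp only [sub_mul]

theorem apply_succ_mul_eq_of_le_apply_add {f : ℝ → ℝ} {lam : ℝ} (hlam : 0 < lam)
    (hdec : AntitoneOn f (Ioi 0)) (hcont : ContinuousOn f (Ioi 0))
    (H : ∀ u, 0 < u → 0 < Real.sin (lam * u) → f u ≤ f (u + π / lam)) (n : ℕ) :
    f ((n + 1) * (π / lam)) = f (π / lam) := by
  set T := π / lam
  have hT : 0 < T := div_pos pi_pos hlam
  -- each multiple of `T` is an endpoint of a half-period on which `sin (lam * u) > 0`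
  have hstep : ∀ m : ℕ, f ((m + 1) * T) = f ((m + 1) * T + T) := by
    intro m
    set x := ((m : ℝ) + 1) * T
    have hx : 0 < x := by positivity
    refine le_antisymm ?_ (hdec hx (by simp only [mem_Ioi]; linarith) (by linarith))
    obtain ⟨k, hk⟩ := Nat.even_or_odd' (m + 1)
    have hmem : x ∈ closure (Ioo (2 * k * T) (2 * k * T + T)) := by
      rw [closure_Ioo (by linarith)]
      rcases hk with hk | hk
      · have hk' : (m : ℝ) + 1 = 2 * k := by exact_mod_cast hk
        simp only [x, hk', mem_Icc]
        constructor <;> nlinarith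
      · have hk' : (m : ℝ) + 1 = 2 * k + 1 := by exact_mod_cast hk
        simp only [x, hk', mem_Icc]
        constructor <;> nlinarith
    have hfx : ContinuousAt f x := hcont.continuousAt (Ioi_mem_nhds hx)
    have hgx : ContinuousAt (fun y => f (y + T)) x :=
      (hcont.continuousAt (Ioi_mem_nhds (by linarith))).comp (continuous_add_const T).continuousAt
    refine ContinuousWithinAt.closure_le hmem hfx.continuousWithinAt hgx.continuousWithinAt
      fun y hy => H y ?_ (sin_mul_pos_of_mem_Ioo hlam k hy)
    exact lt_of_le_of_lt (by positivity) hy.1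
  induction n with
  | zero => simp
  | succ n ih =>
    rw [← ih, hstep n]
    push_cast
    ring_nf

theorem apply_eq_zero_of_apply_succ_mul_eq {f : ℝ → ℝ} {T : ℝ} (hT : 0 < T)
    (hnn : ∀ s, 0 < s → 0 ≤ f s) (hdec : AntitoneOn f (Ioi 0)) (hint : IntegrableOn f (Ioi 0))
    (h : ∀ n : ℕ, f ((n + 1) * T) = f T) : f T = 0 := by
  have hle : ∀ x ∈ Ioi (0 : ℝ), ‖f T‖ ≤ f x := fun x hx => by
    obtain ⟨n, hn⟩ := exists_nat_ge (x / T)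
    have hxn : x ≤ (n + 1) * T := by
      rw [div_le_iff₀ hT] at hn
      nlinarith
    rw [Real.norm_of_nonneg (hnn T hT), ← h n]
    exact hdec hx (by simp only [mem_Ioi]; positivity) hxn
  have hconst : IntegrableOn (fun _ : ℝ => f T) (Ioi 0) :=
    hint.mono' aestronglyMeasurable_const (ae_restrict_of_forall_mem measurableSet_Ioi hle)
  rw [integrableOn_const_iff, Real.volume_Ioi] at hconst
  simpa using hconst

theorem exists_sin_pos_and_apply_add_lt {f : ℝ → ℝ} {lam : ℝ} (hlam : 0 < lam)
    (hnn : ∀ s, 0 < s → 0 ≤ f s) (hdec : AntitoneOn f (Ioi 0))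
    (hcont : ContinuousOn f (Ioi 0)) (hint : IntegrableOn f (Ioi 0))
    (hne : ∃ s, 0 < s ∧ f s ≠ 0) :
    ∃ u, 0 < u ∧ 0 < Real.sin (lam * u) ∧ f (u + π / lam) < f u := by
  by_contra! H
  have hT : 0 < π / lam := div_pos pi_pos hlam
  have hfT := apply_eq_zero_of_apply_succ_mul_eq hT hnn hdec hint
    (apply_succ_mul_eq_of_le_apply_add hlam hdec hcont H)
  obtain ⟨s, hs, hfs⟩ := hne
  refine hfs (le_antisymm ?_ (hnn s hs))
  rcases le_or_gt (π / lam) s with hTs | hsT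
  · exact hfT ▸ hdec hT hs hTs
  · have hsin := sin_mul_pos_of_mem_Ioo hlam 0 (s := s) (by simpa using ⟨hs, hsT⟩)
    calc f s ≤ f (s + π / lam) := H s hs hsin
      _ ≤ f (π / lam) := hdec hT (by simp only [mem_Ioi]; linarith) (by linarith)
      _ = 0 := hfT

theorem integral_Ioi_mul_sin_pos {f : ℝ → ℝ} {lam : ℝ} (hlam : 0 < lam)
    (hnn : ∀ s, 0 < s → 0 ≤ f s) (hdec : AntitoneOn f (Ioi 0))
    (hcont : ContinuousOn f (Ioi 0)) (hint : IntegrableOn f (Ioi 0))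
    (hne : ∃ s, 0 < s ∧ f s ≠ 0) :
    0 < ∫ s in Ioi 0, f s * Real.sin (lam * s) := by
  have hT : 0 < π / lam := div_pos pi_pos hlam
  obtain ⟨u, hu, hsin, hlt⟩ := exists_sin_pos_and_apply_add_lt hlam hnn hdec hcont hint hne
  rw [integral_Ioi_mul_sin_eq hint hlam]
  refine setIntegral_pos_of_continuousAt isOpen_Ioi ?_ (fun x hx => ?_) hu ?_
    (mul_pos (sub_pos.2 hlt) (lt_max_of_lt_left hsin))
  · exact (hint.sub (hint.comp_add_right_Ioi hT.le)).mul_of_norm_le_one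
      (by fun_prop) fun x => abs_max_sin_zero_le_one _
  · exact mul_nonneg (sub_nonneg.2 (hdec hx (by simp only [mem_Ioi] at hx ⊢; linarith)
      (by linarith))) (le_max_right _ _)
  · exact ((hcont.continuousAt (Ioi_mem_nhds hu)).sub
      ((hcont.continuousAt (Ioi_mem_nhds (by linarith))).comp
        (continuous_add_const _).continuousAt)).mul (by fun_prop)

theorem im_integral_ofReal_mul_exp {ν : Measure ℝ} {f : ℝ → ℝ} (hf : Integrable f ν) (lam : ℝ) :
    (∫ s, (f s : ℂ) * cexp (-I * lam * s) ∂ν).im = -∫ s, f s * Real.sin (lam * s) ∂ν := by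
  have harg : ∀ s : ℝ, -I * lam * s = ((-(lam * s) : ℝ) : ℂ) * I := fun s => by push_cast; ring
  have hint : Integrable (fun s => (f s : ℂ) * cexp (-I * lam * s)) ν :=
    hf.ofReal.mul_bdd (by fun_prop) (ae_of_all _ fun s => by rw [harg, norm_exp_ofReal_mul_I])
  have him := integral_im hint
  simp only [RCLike.im_to_complex] at him
  rw [← him, ← integral_neg]
  congr with s
  rw [harg, Complex.im_ofReal_mul, Complex.exp_ofReal_mul_I_im, Real.sin_neg, mul_neg]

theorem stmt_6 (μ : ℝ → ℝ)
    (hμnn : ∀ s, 0 < s → 0 ≤ μ s)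
    (hμdec : AntitoneOn μ (Set.Ioi 0))
    (hμcont : ContinuousOn μ (Set.Ioi 0))
    (hμint : IntegrableOn μ (Set.Ioi 0))
    (hμnonnull : ∃ s : ℝ, 0 < s ∧ μ s ≠ 0)
    (lam : ℝ) :
    (∫ s in Set.Ioi (0:ℝ), (μ s : ℂ) * Complex.exp (-Complex.I * lam * s)) ≠ 0 := by
  rcases eq_or_ne lam 0 with rfl | hlam
  · obtain ⟨s, hs, hμs⟩ := hμnonnull
    have hpos := setIntegral_pos_of_continuousAt isOpen_Ioi hμint hμnn hs
      (hμcont.continuousAt (Ioi_mem_nhds hs)) ((hμnn s hs).lt_of_ne' hμs)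
    simpa [integral_complex_ofReal] using hpos.ne'
  · intro hzero
    have him := im_integral_ofReal_mul_exp hμint lam
    rw [hzero, Complex.zero_im, eq_comm, neg_eq_zero] at him
    rcases hlam.lt_or_gt with hneg | hpos
    · have hsin := integral_Ioi_mul_sin_pos (neg_pos.2 hneg) hμnn hμdec hμcont hμint hμnonnull
      simp [neg_mul, Real.sin_neg, integral_neg, him] at hsin
    · exact (integral_Ioi_mul_sin_pos hpos hμnn hμdec hμcont hμint hμnonnull).ne' him
end

section
/- Let κ, ρ1, ρ2, ρ3, b, δ, β > 0 with γ_g := κ − g(0)ρ1/(βρ3) and g(0) > 0, and suppose h_n → 0 is a sequence of nonzero complex numbers with h_n ≠ −ρ3βγ_g/ρ1 for all n. Define A_n = (ρ2κn² − ρ1bn² − ρ1κ)/(ρ1κ²n²) − δ²β/(ρ3κβγ_g + ρ1κh_n). If either (a) γ_g = 0, or (b) γ_g ≠ 0 and χ_g ≠ 0, then n·|A_n| → ∞ as n → ∞. -/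
/-!
Write `A n = T n - D n`, where `T n` is the rational function of `n` and
`D n = δ²β / (ρ3κβγ + ρ1κ h n)`. The first term converges to a real constant. If `γ = 0` then
`D n = δ²β / (ρ1κ h n)` blows up because `h n → 0`, so `‖A n‖ → ∞`. If `γ ≠ 0` then `D n`
converges as well, and the limit of `A n` is `g0 b / (βρ1γ) · χ ≠ 0`. In both cases `‖A n‖` is
eventually bounded away from `0`, so `n ‖A n‖ → ∞`.
-/

open Filter Topology

lemma tendsto_norm_div_atTop_of_tendsto_zero {α 𝕜 : Type*} [NormedField 𝕜] {l : Filter α}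
    {u : α → 𝕜} {a : 𝕜} (ha : a ≠ 0) (hu : Tendsto u l (𝓝 0)) (hu₀ : ∀ᶠ x in l, u x ≠ 0) :
    Tendsto (fun x => ‖a / u x‖) l atTop := by
  have hinv : Tendsto (fun x => ‖(u x)⁻¹‖) l atTop :=
    tendsto_norm_cobounded_atTop.comp <|
      tendsto_inv₀_nhdsNE_zero.comp (tendsto_nhdsWithin_iff.2 ⟨hu, hu₀⟩)
  simpa only [div_eq_mul_inv, norm_mul] using hinv.const_mul_atTop (norm_pos_iff.2 ha)

lemma tendsto_norm_sub_atTop_of_tendsto {α E : Type*} [SeminormedAddCommGroup E] {l : Filter α}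
    {u v : α → E} {c : E} (hv : Tendsto v l (𝓝 c)) (hu : Tendsto (fun x => ‖u x‖) l atTop) :
    Tendsto (fun x => ‖v x - u x‖) l atTop := by
  refine tendsto_atTop_mono (fun x => ?_) (hu.atTop_add hv.norm.neg)
  rw [norm_sub_rev, ← sub_eq_add_neg]
  exact norm_sub_norm_le _ _

lemma tendsto_sub_div_mul_natCast_sq {𝕜 : Type*} [RCLike 𝕜] (p q d : 𝕜) :
    Tendsto (fun n : ℕ => (p * n ^ 2 - q) / (d * n ^ 2)) atTop (𝓝 (p / d)) := by
  have hlim : Tendsto (fun n : ℕ => p / d - q / d * ((n : 𝕜)⁻¹) ^ 2) atTop (𝓝 (p / d)) := by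
    simpa using tendsto_const_nhds.sub
      ((tendsto_inv_atTop_nhds_zero_nat (𝕜 := 𝕜)).pow 2 |>.const_mul (q / d))
  refine hlim.congr' ?_
  filter_upwards [eventually_ne_atTop 0] with n hn
  have hn' : (n : 𝕜) ≠ 0 := Nat.cast_ne_zero.2 hn
  rcases eq_or_ne d 0 with rfl | hd
  · simp
  · field_simp

/-- The quantity `χ_g` of the paper, with `g0 = g(0)`. -/
noncomputable def chi (κ ρ1 ρ2 ρ3 b δ β g0 : ℝ) : ℝ :=
  (ρ1 / (ρ3 * κ) - β / g0) * (ρ1 / κ - ρ2 / b) - (β / g0) * (ρ1 * δ ^ 2 / (ρ3 * κ * b))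

lemma sub_div_eq_div_mul_chi {κ ρ1 ρ2 ρ3 b δ β g0 γ : ℝ} (hκ : κ ≠ 0) (hρ1 : ρ1 ≠ 0)
    (hρ3 : ρ3 ≠ 0) (hb : b ≠ 0) (hβ : β ≠ 0) (hg0 : g0 ≠ 0) (hγ : γ ≠ 0)
    (hγdef : γ = κ - g0 * ρ1 / (β * ρ3)) :
    (ρ2 * κ - ρ1 * b) / (ρ1 * κ ^ 2) - δ ^ 2 * β / (ρ3 * κ * β * γ) =
      g0 * b / (β * ρ1 * γ) * chi κ ρ1 ρ2 ρ3 b δ β g0 := by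
  have hg0ρ1 : g0 * ρ1 = β * ρ3 * (κ - γ) := by rw [hγdef]; field_simp; ring
  unfold chi
  field_simp
  linear_combination (ρ2 * κ - ρ1 * b) * hg0ρ1

theorem stmt_12_general (κ ρ1 ρ2 ρ3 b δ β g0 : ℝ)
    (hκ : 0 < κ) (hρ1 : 0 < ρ1) (hρ3 : 0 < ρ3)
    (hb : 0 < b) (hδ : 0 < δ) (hβ : 0 < β) (hg0 : 0 < g0)
    (γ : ℝ) (hγdef : γ = κ - g0 * ρ1 / (β * ρ3))
    (h : ℕ → ℂ) (hh0 : Tendsto h atTop (nhds 0))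
    (hhne : ∀ n, h n ≠ 0)
    (A : ℕ → ℂ)
    (hAdef : ∀ n : ℕ, A n =
      ((ρ2 * κ * (n:ℂ) ^ 2 - ρ1 * b * (n:ℂ) ^ 2 - ρ1 * κ) / (ρ1 * κ ^ 2 * (n:ℂ) ^ 2))
        - (δ:ℂ) ^ 2 * β / ((ρ3 * κ * β * γ : ℝ) + (ρ1 * κ : ℝ) * h n))
    (hcase : γ = 0 ∨ (γ ≠ 0 ∧
      (ρ1 / (ρ3 * κ) - β / g0) * (ρ1 / κ - ρ2 / b)
        - (β / g0) * (ρ1 * δ ^ 2 / (ρ3 * κ * b)) ≠ 0)) :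
    Tendsto (fun n : ℕ => (n : ℝ) * ‖A n‖) atTop atTop := by
  set D : ℕ → ℂ := fun n => (δ:ℂ) ^ 2 * β / ((ρ3 * κ * β * γ : ℝ) + (ρ1 * κ : ℝ) * h n)
  have hA : A = fun n : ℕ =>
      ((ρ2 * κ - ρ1 * b) * (n:ℂ) ^ 2 - ρ1 * κ) / (ρ1 * κ ^ 2 * (n:ℂ) ^ 2) - D n :=
    funext fun n => by rw [hAdef]; ring
  have hT := tendsto_sub_div_mul_natCast_sq (𝕜 := ℂ) (ρ2 * κ - ρ1 * b) (ρ1 * κ) (ρ1 * κ ^ 2)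
  rcases hcase with hγ0 | ⟨hγ, hχ⟩
  · have hD : Tendsto (fun n => ‖D n‖) atTop atTop := by
      simp only [D, hγ0, mul_zero, Complex.ofReal_zero, zero_add]
      refine tendsto_norm_div_atTop_of_tendsto_zero (by simp [hδ.ne', hβ.ne']) ?_
        (Eventually.of_forall fun n => mul_ne_zero (by simp [hρ1.ne', hκ.ne']) (hhne n))
      simpa using hh0.const_mul ((ρ1 * κ : ℝ) : ℂ)
    rw [hA]
    exact tendsto_natCast_atTop_atTop.atTop_mul_atTop₀ (tendsto_norm_sub_atTop_of_tendsto hT hD)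
  · have hγ' : ((ρ3 * κ * β * γ : ℝ) : ℂ) ≠ 0 := by simp [hρ3.ne', hκ.ne', hβ.ne', hγ]
    have hD : Tendsto D atTop (𝓝 ((δ:ℂ) ^ 2 * β / ((ρ3 * κ * β * γ : ℝ) : ℂ))) :=
      tendsto_const_nhds.div (by simpa using tendsto_const_nhds.add (hh0.const_mul _)) hγ'
    have hL : (ρ2 * κ - ρ1 * b) / (ρ1 * κ ^ 2) - (δ:ℂ) ^ 2 * β / ((ρ3 * κ * β * γ : ℝ) : ℂ)
        ≠ 0 := by
      have hLreal := sub_div_eq_div_mul_chi (ρ2 := ρ2) (δ := δ)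
        hκ.ne' hρ1.ne' hρ3.ne' hb.ne' hβ.ne' hg0.ne' hγ hγdef
      refine ne_of_eq_of_ne (b := ((g0 * b / (β * ρ1 * γ) * chi κ ρ1 ρ2 ρ3 b δ β g0 : ℝ) : ℂ))
        (by rw [← hLreal]; push_cast; ring) ?_
      exact Complex.ofReal_ne_zero.2 <|
        mul_ne_zero (by simp [hg0.ne', hb.ne', hβ.ne', hρ1.ne', hγ]) hχ
    rw [hA]
    exact tendsto_natCast_atTop_atTop.atTop_mul_pos (norm_pos_iff.2 hL) (hT.sub hD).norm

theorem stmt_12 (κ ρ1 ρ2 ρ3 b δ β g0 : ℝ)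
    (hκ : 0 < κ) (hρ1 : 0 < ρ1) (hρ2 : 0 < ρ2) (hρ3 : 0 < ρ3)
    (hb : 0 < b) (hδ : 0 < δ) (hβ : 0 < β) (hg0 : 0 < g0)
    (γ : ℝ) (hγdef : γ = κ - g0 * ρ1 / (β * ρ3))
    (h : ℕ → ℂ) (hh0 : Tendsto h atTop (nhds 0))
    (hhne : ∀ n, h n ≠ 0) (hhne' : ∀ n, h n ≠ -(ρ3 * β * γ / ρ1 : ℝ))
    (A : ℕ → ℂ)
    (hAdef : ∀ n : ℕ, A n =
      ((ρ2 * κ * (n:ℂ) ^ 2 - ρ1 * b * (n:ℂ) ^ 2 - ρ1 * κ) / (ρ1 * κ ^ 2 * (n:ℂ) ^ 2))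
        - (δ:ℂ) ^ 2 * β / ((ρ3 * κ * β * γ : ℝ) + (ρ1 * κ : ℝ) * h n))
    (hcase : γ = 0 ∨ (γ ≠ 0 ∧
      (ρ1 / (ρ3 * κ) - β / g0) * (ρ1 / κ - ρ2 / b)
        - (β / g0) * (ρ1 * δ ^ 2 / (ρ3 * κ * b)) ≠ 0)) :
    Tendsto (fun n : ℕ => (n : ℝ) * ‖A n‖) atTop atTop :=
  stmt_12_general κ ρ1 ρ2 ρ3 b δ β g0 hκ hρ1 hρ3 hb hδ hβ hg0 γ hγdef h hh0 hhne A hAdef hcase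
end

section
/- For μ : (0,∞) → [0,∞) integrable and nonnull, and η ∈ L²((0,∞), μ(s)ds; H₀¹(0,ℓ)) with Dη ∈ L²((0,∞), μ(s)ds; H₀¹(0,ℓ)), lim_{s→0⁺}‖η_x(s)‖ = 0, μ absolutely continuous nonincreasing, and μ(s)‖η_x(s)‖² → 0 as s → ∞: the identity 2⟨Tη, η⟩_M = ∫₀^∞ μ′(s)‖η_x(s)‖² ds = −Γ[η] holds, where Tη = −Dη. In particular ⟨Tη, η⟩_M ≤ 0. -/
/-!
Write `P = μ ‖η‖²` and `h = μ' ‖η‖² + 2 μ ⟪η', η⟫`. On `[a, b] ⊆ (0, ∞)` with `μ b > 0` both `μ` and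
`‖η‖²` are absolutely continuous (the latter because `⟪η', η⟫ = μ ⟪η', η⟫ / μ` is integrable there),
so integration by parts gives `∫ a..b, h = P b - P a`. By continuity this persists up to the first
zero of `μ`, after which `μ` and `h` vanish, so it holds for all `0 < a ≤ b`. Letting `b → ∞` gives
`∫ (a, ∞), h = -P a`, hence `P a → L := -∫ (0, ∞), h` as `a → 0⁺`. If `L > 0`, then `‖η‖² → 0`
forces `μ → ∞` at `0`; on `(t, δ]` with `μ t ≥ 2 μ δ` we get `‖η‖² ≥ L / (2 μ t)`, so
`∫ (t, δ], -μ' ‖η‖² ≥ L (μ t - μ δ) / (2 μ t) ≥ L / 4` for arbitrarily small `δ`, contradicting the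
integrability of `μ' ‖η‖²` near `0`. So `∫ (0, ∞), h = 0`, and the sign comes from `μ' ≤ 0`.
-/

open MeasureTheory Set Filter Topology

theorem AbsolutelyContinuousOnInterval.congr {X : Type*} [PseudoMetricSpace X] {f g : ℝ → X}
    {a b : ℝ} (hf : AbsolutelyContinuousOnInterval f a b) (hfg : EqOn f g (uIcc a b)) :
    AbsolutelyContinuousOnInterval g a b := by
  refine Tendsto.congr' ?_ hf
  filter_upwards [mem_inf_of_right (mem_principal_self _)] with E hE
  refine Finset.sum_congr rfl fun i hi => ?_
  rw [hfg (hE.1 i hi).1, hfg (hE.1 i hi).2]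

theorem AbsolutelyContinuousOnInterval.of_eq_add_integral {f g : ℝ → ℝ} {a b : ℝ}
    (hg : IntervalIntegrable g volume a b) (hf : ∀ x ∈ uIcc a b, f x = f a + ∫ t in a..x, g t) :
    AbsolutelyContinuousOnInterval f a b := by
  have hconst : AbsolutelyContinuousOnInterval (fun _ => f a) a b :=
    (LipschitzWith.const (f a)).lipschitzOnWith.absolutelyContinuousOnInterval
  exact (hconst.add (hg.absolutelyContinuousOnInterval_intervalIntegral left_mem_uIcc)).congr
    fun x hx => (hf x hx).symm

theorem AbsolutelyContinuousOnInterval.of_hasDerivAt {f f' : ℝ → ℝ} {a b : ℝ}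
    (hf : ∀ x ∈ uIcc a b, HasDerivAt f (f' x) x) (hf' : IntervalIntegrable f' volume a b) :
    AbsolutelyContinuousOnInterval f a b := by
  refine of_eq_add_integral hf' fun x hx => ?_
  have hsub : uIcc a x ⊆ uIcc a b := uIcc_subset_uIcc_left hx
  rw [intervalIntegral.integral_eq_sub_of_hasDerivAt (fun y hy => hf y (hsub hy))
    (hf'.mono_set hsub), add_sub_cancel]

theorem AntitoneOn.intervalIntegrable_deriv {f : ℝ → ℝ} {a b : ℝ}
    (hf : AntitoneOn f (uIcc a b)) : IntervalIntegrable (deriv f) volume a b := by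
  simpa [deriv.neg', Pi.neg_def] using hf.neg.intervalIntegrable_deriv.neg

theorem tendsto_setIntegral_Ioc_nhdsGT {E : Type*} [NormedAddCommGroup E] [NormedSpace ℝ E]
    {f : ℝ → E} {a : ℝ} (hf : IntegrableOn f (Ioi a)) :
    Tendsto (fun x => ∫ t in Ioc a x, f t) (𝓝[>] a) (𝓝 0) := by
  have hvol : Tendsto (fun x => volume.restrict (Ioi a) (Ioc a x)) (𝓝[>] a) (𝓝 0) := by
    simp_rw [Measure.restrict_apply measurableSet_Ioc, Ioc_inter_Ioi, max_self, Real.volume_Ioc]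
    rw [← ENNReal.ofReal_zero, ← sub_self a]
    exact ENNReal.tendsto_ofReal ((tendsto_id.sub_const a).mono_left nhdsWithin_le_nhds)
  refine (hf.tendsto_setIntegral_nhds_zero hvol).congr fun x => ?_
  rw [Measure.restrict_restrict measurableSet_Ioc, Ioc_inter_Ioi, max_self]

theorem AntitoneOn.deriv_nonpos {f : ℝ → ℝ} {s : Set ℝ} {x : ℝ} (hf : AntitoneOn f s)
    (hs : IsOpen s) (hx : x ∈ s) : deriv f x ≤ 0 :=
  (derivWithin_of_isOpen hs hx).symm.trans_le hf.derivWithin_nonpos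

theorem IntervalIntegrable.of_mul_continuousOn {f u : ℝ → ℝ} {a b : ℝ}
    (h : IntervalIntegrable (fun x => f x * u x) volume a b) (hf : ContinuousOn f (uIcc a b))
    (hf0 : ∀ x ∈ uIcc a b, f x ≠ 0) : IntervalIntegrable u volume a b := by
  refine (h.continuousOn_mul (hf.inv₀ hf0)).congr_ae ?_
  filter_upwards [ae_restrict_mem measurableSet_uIoc] with x hx
  rw [Pi.inv_apply, inv_mul_cancel_left₀ (hf0 x (uIoc_subset_uIcc hx))]

theorem AbsolutelyContinuousOnInterval.integral_deriv_mul_eq_sub_of_hasDerivAt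
    {f g g' : ℝ → ℝ} {a b : ℝ} (hf : AbsolutelyContinuousOnInterval f a b)
    (hg : ∀ x ∈ uIcc a b, HasDerivAt g (g' x) x) (hg' : IntervalIntegrable g' volume a b) :
    ∫ x in a..b, deriv f x * g x + f x * g' x = f b * g b - f a * g a := by
  rw [← hf.integral_deriv_mul_eq_sub (of_hasDerivAt hg hg')]
  refine intervalIntegral.integral_congr fun x hx => ?_
  simp only [(hg x hx).deriv]

theorem tendsto_atTop_of_mul_tendsto_pos {α : Type*} {l : Filter α} {f g : α → ℝ} {L : ℝ}
    (hL : 0 < L) (hfg : Tendsto (fun x => f x * g x) l (𝓝 L)) (hg : Tendsto g l (𝓝[>] 0)) :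
    Tendsto f l atTop := by
  refine (hfg.pos_mul_atTop hL (tendsto_inv_nhdsGT_zero.comp hg)).congr' ?_
  filter_upwards [hg self_mem_nhdsWithin] with x hx
  exact mul_inv_cancel_right₀ (ne_of_gt hx) (f x)


section Kernel

variable {μ F : ℝ → ℝ}

theorem intervalIntegrable_deriv_of_antitoneOn_Ioi (hμdec : AntitoneOn μ (Ioi 0)) {a b : ℝ}
    (ha : 0 < a) (hb : 0 < b) : IntervalIntegrable (deriv μ) volume a b :=
  (hμdec.mono fun _ hx => (lt_min ha hb).trans_le hx.1).intervalIntegrable_deriv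

theorem sub_eq_integral_deriv_of_antitoneOn_Ioi (hμdec : AntitoneOn μ (Ioi 0))
    (hμAC : ∀ s, 0 < s → μ s = μ 1 + ∫ x in (1:ℝ)..s, deriv μ x) {a b : ℝ} (ha : 0 < a)
    (hb : 0 < b) : μ b - μ a = ∫ x in a..b, deriv μ x := by
  rw [hμAC a ha, hμAC b hb, ← intervalIntegral.integral_add_adjacent_intervals
    (intervalIntegrable_deriv_of_antitoneOn_Ioi hμdec one_pos ha)
    (intervalIntegrable_deriv_of_antitoneOn_Ioi hμdec ha hb)]
  ring

theorem absolutelyContinuousOnInterval_of_antitoneOn_Ioi (hμdec : AntitoneOn μ (Ioi 0))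
    (hμAC : ∀ s, 0 < s → μ s = μ 1 + ∫ x in (1:ℝ)..s, deriv μ x) {a b : ℝ} (ha : 0 < a)
    (hb : 0 < b) : AbsolutelyContinuousOnInterval μ a b :=
  .of_eq_add_integral (intervalIntegrable_deriv_of_antitoneOn_Ioi hμdec ha hb) fun x hx => by
    rw [← sub_eq_integral_deriv_of_antitoneOn_Ioi hμdec hμAC ha
      ((lt_min ha hb).trans_le hx.1), add_sub_cancel]

theorem eq_zero_of_antitoneOn_Ioi (hμnn : ∀ s, 0 < s → 0 ≤ μ s) (hμdec : AntitoneOn μ (Ioi 0))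
    {T s : ℝ} (hT : 0 < T) (hμT : μ T = 0) (hTs : T ≤ s) : μ s = 0 :=
  le_antisymm (hμT ▸ hμdec hT (hT.trans_le hTs) hTs) (hμnn s (hT.trans_le hTs))

theorem deriv_eq_zero_of_antitoneOn_Ioi (hμnn : ∀ s, 0 < s → 0 ≤ μ s)
    (hμdec : AntitoneOn μ (Ioi 0)) {T s : ℝ} (hT : 0 < T) (hμT : μ T = 0) (hTs : T < s) :
    deriv μ s = 0 := by
  have hμ : μ =ᶠ[𝓝 s] fun _ => 0 := (eventually_gt_nhds hTs).mono fun _ hy =>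
    eq_zero_of_antitoneOn_Ioi hμnn hμdec hT hμT hy.le
  rw [hμ.deriv_eq, deriv_const]

theorem exists_first_zero_of_antitoneOn_Ioi (hμnn : ∀ s, 0 < s → 0 ≤ μ s)
    (hμdec : AntitoneOn μ (Ioi 0))
    (hμAC : ∀ s, 0 < s → μ s = μ 1 + ∫ x in (1:ℝ)..s, deriv μ x) {a b : ℝ} (ha : 0 < a)
    (hab : a ≤ b) (hμb : μ b = 0) : ∃ T ∈ Icc a b, μ T = 0 ∧ ∀ x ∈ Ico a T, 0 < μ x := by
  have hμcont : ContinuousOn μ (Icc a b) := by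
    simpa [uIcc_of_le hab] using
      (absolutelyContinuousOnInterval_of_antitoneOn_Ioi hμdec hμAC ha (ha.trans_le hab)).continuousOn
  have hbdd : BddBelow (Icc a b ∩ μ ⁻¹' {0}) := ⟨a, fun x hx => hx.1.1⟩
  obtain ⟨hT, hμT⟩ := (hμcont.preimage_isClosed_of_isClosed isClosed_Icc
    isClosed_singleton).csInf_mem ⟨b, ⟨hab, le_rfl⟩, hμb⟩ hbdd
  refine ⟨_, hT, hμT, fun x hx => (hμnn x (ha.trans_le hx.1)).lt_of_ne fun hμx => ?_⟩
  exact hx.2.not_ge (csInf_le hbdd ⟨⟨hx.1, hx.2.le.trans hT.2⟩, hμx.symm⟩)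

theorem div_mul_sub_le_setIntegral_neg_deriv_mul (hμdec : AntitoneOn μ (Ioi 0))
    (hμAC : ∀ s, 0 < s → μ s = μ 1 + ∫ x in (1:ℝ)..s, deriv μ x) (hF : ∀ s, 0 < s → 0 ≤ F s)
    (hint : IntegrableOn (fun s => deriv μ s * F s) (Ioi 0)) {t δ c : ℝ} (ht : 0 < t)
    (htδ : t ≤ δ) (hμt : 0 < μ t) (hc : ∀ s ∈ Ioc t δ, c ≤ μ s * F s) :
    c / μ t * (μ t - μ δ) ≤ ∫ s in Ioc t δ, -(deriv μ s * F s) := by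
  have hderiv : IntegrableOn (deriv μ) (Ioc t δ) :=
    (intervalIntegrable_iff_integrableOn_Ioc_of_le htδ).1
      (intervalIntegrable_deriv_of_antitoneOn_Ioi hμdec ht (ht.trans_le htδ))
  calc c / μ t * (μ t - μ δ) = ∫ s in Ioc t δ, -deriv μ s * (c / μ t) := by
        rw [integral_mul_const, integral_neg, ← intervalIntegral.integral_of_le htδ,
          ← sub_eq_integral_deriv_of_antitoneOn_Ioi hμdec hμAC ht (ht.trans_le htδ)]
        ring
    _ ≤ ∫ s in Ioc t δ, -(deriv μ s * F s) := by
        refine setIntegral_mono_on (hderiv.neg.mul_const _)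
          (hint.mono_set fun s hs => ht.trans hs.1).neg measurableSet_Ioc fun s hs => ?_
        have hs0 : 0 < s := ht.trans hs.1
        have hcF : c / μ t ≤ F s := (div_le_iff₀ hμt).2 <| by
          nlinarith [hc s hs, hμdec ht hs0 hs.1.le, hF s hs0]
        nlinarith [hμdec.deriv_nonpos isOpen_Ioi hs0]

theorem eq_zero_of_tendsto_mul_nhdsGT_zero (hμnn : ∀ s, 0 < s → 0 ≤ μ s)
    (hμdec : AntitoneOn μ (Ioi 0))
    (hμAC : ∀ s, 0 < s → μ s = μ 1 + ∫ x in (1:ℝ)..s, deriv μ x) (hF : ∀ s, 0 < s → 0 ≤ F s)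
    (hF0 : Tendsto F (𝓝[>] 0) (𝓝 0)) (hint : IntegrableOn (fun s => deriv μ s * F s) (Ioi 0))
    {L : ℝ} (hL : Tendsto (fun s => μ s * F s) (𝓝[>] 0) (𝓝 L)) : L = 0 := by
  have hLnn : 0 ≤ L := ge_of_tendsto hL <|
    eventually_mem_nhdsWithin.mono fun s hs => mul_nonneg (hμnn s hs) (hF s hs)
  by_contra hL0
  have hLpos : 0 < L := hLnn.lt_of_ne (Ne.symm hL0)
  obtain ⟨ε, hε : 0 < ε, hεL⟩ := mem_nhdsGT_iff_exists_Ioo_subset.1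
    (hL.eventually (lt_mem_nhds (half_lt_self hLpos)))
  have hFpos : Tendsto F (𝓝[>] 0) (𝓝[>] 0) := by
    refine tendsto_nhdsWithin_iff.2 ⟨hF0, ?_⟩
    filter_upwards [Ioo_mem_nhdsGT hε] with s hs
    have hLs : L / 2 < μ s * F s := hεL hs
    exact pos_of_mul_pos_right (by linarith) (hμnn s hs.1)
  have hμtop := tendsto_atTop_of_mul_tendsto_pos hLpos hL hFpos
  obtain ⟨δ, ⟨hδ0, hδε⟩, hδsmall⟩ := (Filter.Eventually.and (Ioo_mem_nhdsGT hε)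
    ((tendsto_setIntegral_Ioc_nhdsGT hint.neg).eventually (gt_mem_nhds (by positivity :
      (0 : ℝ) < L / 4)))).exists
  obtain ⟨t, ⟨ht0, htδ⟩, hμt, hμt0⟩ := (Filter.Eventually.and (Ioo_mem_nhdsGT hδ0)
    ((hμtop.eventually_ge_atTop (2 * μ δ)).and (hμtop.eventually_gt_atTop 0))).exists
  have hest := div_mul_sub_le_setIntegral_neg_deriv_mul hμdec hμAC hF hint ht0 htδ.le
    hμt0 fun s hs => (hεL ⟨ht0.trans hs.1, hs.2.trans_lt hδε⟩).le
  have hmono : ∫ s in Ioc t δ, -(deriv μ s * F s) ≤ ∫ s in Ioc 0 δ, -(deriv μ s * F s) :=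
    setIntegral_mono_set (hint.neg.mono_set Ioc_subset_Ioi_self)
      ((ae_restrict_mem measurableSet_Ioc).mono fun s hs => neg_nonneg.2
        (mul_nonpos_of_nonpos_of_nonneg (hμdec.deriv_nonpos isOpen_Ioi hs.1) (hF s hs.1)))
      (Ioc_subset_Ioc_left ht0.le).eventuallyLE
  have hquarter : L / 4 ≤ L / 2 / μ t * (μ t - μ δ) := by
    rw [div_mul_eq_mul_div, le_div_iff₀ hμt0]
    nlinarith [hμnn δ hδ0]
  simp only [Pi.neg_apply] at hδsmall
  linarith

end Kernel

section NormSq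

variable {H : Type*} [NormedAddCommGroup H] [InnerProductSpace ℝ H] {μ : ℝ → ℝ} {η η' : ℝ → H}

theorem integral_deriv_mul_norm_sq_eq_sub_of_pos (hμdec : AntitoneOn μ (Ioi 0))
    (hμAC : ∀ s, 0 < s → μ s = μ 1 + ∫ x in (1:ℝ)..s, deriv μ x)
    (hη' : ∀ s, 0 < s → HasDerivAt η (η' s) s)
    (hint1 : IntegrableOn (fun s => μ s * inner ℝ (η' s) (η s) : ℝ → ℝ) (Ioi 0))
    {a b : ℝ} (ha : 0 < a) (hab : a ≤ b) (hμb : 0 < μ b) :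
    ∫ s in a..b, deriv μ s * ‖η s‖ ^ 2 + μ s * (2 * inner ℝ (η' s) (η s))
      = μ b * ‖η b‖ ^ 2 - μ a * ‖η a‖ ^ 2 := by
  have hsub : uIcc a b ⊆ Ioi 0 := fun x hx => (lt_min ha (ha.trans_le hab)).trans_le hx.1
  have hμac := absolutelyContinuousOnInterval_of_antitoneOn_Ioi hμdec hμAC ha (ha.trans_le hab)
  have hμpos : ∀ x ∈ uIcc a b, μ x ≠ 0 := fun x hx =>
    (hμb.trans_le (hμdec (hsub hx) (hsub right_mem_uIcc) (by simpa [hab] using hx.2))).ne'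
  refine hμac.integral_deriv_mul_eq_sub_of_hasDerivAt (fun x hx => ?_) ?_
  · simpa [real_inner_comm] using (hη' x (hsub hx)).norm_sq
  · exact ((hint1.mono_set hsub).intervalIntegrable.of_mul_continuousOn hμac.continuousOn
      hμpos).const_mul 2

theorem integral_deriv_mul_norm_sq_eq_sub_of_forall_Ico (hμdec : AntitoneOn μ (Ioi 0))
    (hμAC : ∀ s, 0 < s → μ s = μ 1 + ∫ x in (1:ℝ)..s, deriv μ x)
    (hη' : ∀ s, 0 < s → HasDerivAt η (η' s) s)
    (hint1 : IntegrableOn (fun s => μ s * inner ℝ (η' s) (η s) : ℝ → ℝ) (Ioi 0))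
    (hint : IntegrableOn
      (fun s => deriv μ s * ‖η s‖ ^ 2 + μ s * (2 * inner ℝ (η' s) (η s))) (Ioi 0))
    {a b : ℝ} (ha : 0 < a) (hab : a ≤ b) (hμpos : ∀ x ∈ Ico a b, 0 < μ x) :
    ∫ s in a..b, deriv μ s * ‖η s‖ ^ 2 + μ s * (2 * inner ℝ (η' s) (η s))
      = μ b * ‖η b‖ ^ 2 - μ a * ‖η a‖ ^ 2 := by
  obtain rfl | hab' := hab.eq_or_lt
  · simp
  have hb : 0 < b := ha.trans hab'
  have hIco : EqOn (fun x => ∫ s in a..x,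
      deriv μ s * ‖η s‖ ^ 2 + μ s * (2 * inner ℝ (η' s) (η s)))
      (fun x => μ x * ‖η x‖ ^ 2 - μ a * ‖η a‖ ^ 2) (Ico a b) := fun x hx =>
    integral_deriv_mul_norm_sq_eq_sub_of_pos hμdec hμAC hη' hint1 ha hx.1 (hμpos x hx)
  refine hIco.of_subset_closure ?_ ?_ Ico_subset_Icc_self (closure_Ico hab'.ne).ge ⟨hab, le_rfl⟩
  · simpa [uIcc_of_le hab] using intervalIntegral.continuousOn_primitive_interval
      (hint.mono_set fun x hx => (lt_min ha hb).trans_le hx.1)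
  · have hμcont : ContinuousOn μ (Icc a b) := by
      simpa [uIcc_of_le hab] using
        (absolutelyContinuousOnInterval_of_antitoneOn_Ioi hμdec hμAC ha hb).continuousOn
    refine (hμcont.mul fun x hx => ?_).sub continuousOn_const
    exact ((hη' x (ha.trans_le hx.1)).continuousAt.norm.pow 2).continuousWithinAt

theorem integral_deriv_mul_norm_sq_eq_sub (hμnn : ∀ s, 0 < s → 0 ≤ μ s)
    (hμdec : AntitoneOn μ (Ioi 0))
    (hμAC : ∀ s, 0 < s → μ s = μ 1 + ∫ x in (1:ℝ)..s, deriv μ x)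
    (hη' : ∀ s, 0 < s → HasDerivAt η (η' s) s)
    (hint1 : IntegrableOn (fun s => μ s * inner ℝ (η' s) (η s) : ℝ → ℝ) (Ioi 0))
    (hint : IntegrableOn
      (fun s => deriv μ s * ‖η s‖ ^ 2 + μ s * (2 * inner ℝ (η' s) (η s))) (Ioi 0))
    {a b : ℝ} (ha : 0 < a) (hab : a ≤ b) :
    ∫ s in a..b, deriv μ s * ‖η s‖ ^ 2 + μ s * (2 * inner ℝ (η' s) (η s))
      = μ b * ‖η b‖ ^ 2 - μ a * ‖η a‖ ^ 2 := by
  obtain hμb | hμb := (hμnn b (ha.trans_le hab)).lt_or_eq'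
  · exact integral_deriv_mul_norm_sq_eq_sub_of_pos hμdec hμAC hη' hint1 ha hab hμb
  have hint' : ∀ c d, a ≤ c → a ≤ d → IntervalIntegrable
      (fun s => deriv μ s * ‖η s‖ ^ 2 + μ s * (2 * inner ℝ (η' s) (η s))) volume c d :=
    fun c d hc hd => (hint.mono_set fun x hx => (ha.trans_le (le_min hc hd)).trans_le hx.1)
      |>.intervalIntegrable
  obtain ⟨T, ⟨haT, hTb⟩, hμT, hμpos⟩ :=
    exists_first_zero_of_antitoneOn_Ioi hμnn hμdec hμAC ha hab hμb
  have hT : 0 < T := ha.trans_le haT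
  have hupto := integral_deriv_mul_norm_sq_eq_sub_of_forall_Ico hμdec hμAC hη' hint1 hint ha haT
    hμpos
  have hafter : ∫ s in T..b, deriv μ s * ‖η s‖ ^ 2 + μ s * (2 * inner ℝ (η' s) (η s)) = 0 := by
    refine intervalIntegral.integral_zero_ae (ae_of_all _ fun x hx => ?_)
    rw [uIoc_of_le hTb] at hx
    rw [deriv_eq_zero_of_antitoneOn_Ioi hμnn hμdec hT hμT hx.1,
      eq_zero_of_antitoneOn_Ioi hμnn hμdec hT hμT hx.1.le]
    ring
  rw [← intervalIntegral.integral_add_adjacent_intervals (hint' a T le_rfl haT)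
    (hint' T b haT hab), hupto, hafter, hμT, eq_zero_of_antitoneOn_Ioi hμnn hμdec hT hμT hTb]
  ring

theorem integral_Ioi_deriv_mul_norm_sq_eq_neg (hμnn : ∀ s, 0 < s → 0 ≤ μ s)
    (hμdec : AntitoneOn μ (Ioi 0))
    (hμAC : ∀ s, 0 < s → μ s = μ 1 + ∫ x in (1:ℝ)..s, deriv μ x)
    (hη' : ∀ s, 0 < s → HasDerivAt η (η' s) s)
    (hηinf : Tendsto (fun s => μ s * ‖η s‖ ^ 2) atTop (𝓝 0))
    (hint1 : IntegrableOn (fun s => μ s * inner ℝ (η' s) (η s) : ℝ → ℝ) (Ioi 0))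
    (hint : IntegrableOn
      (fun s => deriv μ s * ‖η s‖ ^ 2 + μ s * (2 * inner ℝ (η' s) (η s))) (Ioi 0))
    {a : ℝ} (ha : 0 < a) :
    ∫ s in Ioi a, deriv μ s * ‖η s‖ ^ 2 + μ s * (2 * inner ℝ (η' s) (η s))
      = -(μ a * ‖η a‖ ^ 2) := by
  refine tendsto_nhds_unique (intervalIntegral_tendsto_integral_Ioi a
    (hint.mono_set (Ioi_subset_Ioi ha.le)) tendsto_id) ?_
  rw [← zero_sub]
  refine (hηinf.sub_const _).congr' ?_
  filter_upwards [eventually_ge_atTop a] with b hb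
  exact (integral_deriv_mul_norm_sq_eq_sub hμnn hμdec hμAC hη' hint1 hint ha hb).symm

theorem integral_Ioi_deriv_mul_norm_sq_eq_zero (hμnn : ∀ s, 0 < s → 0 ≤ μ s)
    (hμdec : AntitoneOn μ (Ioi 0))
    (hμAC : ∀ s, 0 < s → μ s = μ 1 + ∫ x in (1:ℝ)..s, deriv μ x)
    (hη' : ∀ s, 0 < s → HasDerivAt η (η' s) s)
    (hη0 : Tendsto (fun s => ‖η s‖) (𝓝[>] 0) (𝓝 0))
    (hηinf : Tendsto (fun s => μ s * ‖η s‖ ^ 2) atTop (𝓝 0))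
    (hint1 : IntegrableOn (fun s => μ s * inner ℝ (η' s) (η s) : ℝ → ℝ) (Ioi 0))
    (hint2 : IntegrableOn (fun s => deriv μ s * ‖η s‖ ^ 2) (Ioi 0))
    (hint : IntegrableOn
      (fun s => deriv μ s * ‖η s‖ ^ 2 + μ s * (2 * inner ℝ (η' s) (η s))) (Ioi 0)) :
    ∫ s in Ioi 0, deriv μ s * ‖η s‖ ^ 2 + μ s * (2 * inner ℝ (η' s) (η s)) = 0 := by
  rw [← neg_eq_zero]
  refine eq_zero_of_tendsto_mul_nhdsGT_zero hμnn hμdec hμAC (fun _ _ => by positivity)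
    (by simpa using hη0.pow 2) hint2 ?_
  have hhead := (tendsto_setIntegral_Ioc_nhdsGT hint).sub_const
    (∫ s in Ioi 0, deriv μ s * ‖η s‖ ^ 2 + μ s * (2 * inner ℝ (η' s) (η s)))
  rw [zero_sub] at hhead
  refine hhead.congr' (eventually_mem_nhdsWithin.mono fun a (ha : 0 < a) => ?_)
  rw [← Ioc_union_Ioi_eq_Ioi ha.le, setIntegral_union (Ioc_disjoint_Ioi le_rfl) measurableSet_Ioi
    (hint.mono_set Ioc_subset_Ioi_self) (hint.mono_set (Ioi_subset_Ioi ha.le)),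
    integral_Ioi_deriv_mul_norm_sq_eq_neg hμnn hμdec hμAC hη' hηinf hint1 hint ha]
  ring

end NormSq

theorem stmt_18_general {H : Type*} [NormedAddCommGroup H] [InnerProductSpace ℝ H]
    (μ : ℝ → ℝ)
    (hμnn : ∀ s, 0 < s → 0 ≤ μ s)
    (hμdec : AntitoneOn μ (Set.Ioi 0))
    (hμAC : ∀ s, 0 < s → μ s = μ 1 + ∫ x in (1:ℝ)..s, deriv μ x)
    (η η' : ℝ → H)
    (hη' : ∀ s, 0 < s → HasDerivAt η (η' s) s)
    (hη0 : Filter.Tendsto (fun s => ‖η s‖) (nhdsWithin 0 (Set.Ioi 0)) (nhds 0))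
    (hηinf : Filter.Tendsto (fun s => μ s * ‖η s‖ ^ 2) Filter.atTop (nhds 0))
    (hint1 : IntegrableOn (fun s => μ s * inner ℝ (η' s) (η s) : ℝ → ℝ) (Set.Ioi 0))
    (hint2 : IntegrableOn (fun s => deriv μ s * ‖η s‖ ^ 2) (Set.Ioi 0)) :
    2 * (∫ s in Set.Ioi (0:ℝ), μ s * (inner ℝ (-η' s) (η s) : ℝ))
        = ∫ s in Set.Ioi (0:ℝ), deriv μ s * ‖η s‖ ^ 2 ∧
    (∫ s in Set.Ioi (0:ℝ), μ s * (inner ℝ (-η' s) (η s) : ℝ)) ≤ 0 := by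
  have hμinner : IntegrableOn (fun s => μ s * (2 * inner ℝ (η' s) (η s))) (Ioi 0) :=
    (hint1.const_mul 2).congr (ae_of_all _ fun _ => mul_left_comm _ _ _)
  have hzero := integral_Ioi_deriv_mul_norm_sq_eq_zero hμnn hμdec hμAC hη' hη0 hηinf hint1 hint2
    (hint2.add hμinner)
  rw [integral_add hint2 hμinner] at hzero
  have hinner : ∫ s in Ioi 0, μ s * (2 * inner ℝ (η' s) (η s))
      = -(2 * ∫ s in Ioi (0:ℝ), μ s * inner ℝ (-η' s) (η s)) := by
    simp only [inner_neg_left, mul_neg, integral_neg, ← integral_const_mul, mul_left_comm, neg_neg]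
  have hnonpos : ∫ s in Ioi (0:ℝ), deriv μ s * ‖η s‖ ^ 2 ≤ 0 :=
    setIntegral_nonpos measurableSet_Ioi fun s hs =>
      mul_nonpos_of_nonpos_of_nonneg (hμdec.deriv_nonpos isOpen_Ioi hs) (by positivity)
  constructor <;> linarith

theorem stmt_18 {H : Type*} [NormedAddCommGroup H] [InnerProductSpace ℝ H]
    (μ : ℝ → ℝ)
    (hμnn : ∀ s, 0 < s → 0 ≤ μ s)
    (hμint : IntegrableOn μ (Set.Ioi 0))
    (hμnonnull : ∃ s, 0 < s ∧ μ s ≠ 0)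
    (hμdec : AntitoneOn μ (Set.Ioi 0))
    (hμAC : ∀ s, 0 < s → μ s = μ 1 + ∫ x in (1:ℝ)..s, deriv μ x)
    (η η' : ℝ → H)
    (hη' : ∀ s, 0 < s → HasDerivAt η (η' s) s)
    (hη0 : Filter.Tendsto (fun s => ‖η s‖) (nhdsWithin 0 (Set.Ioi 0)) (nhds 0))
    (hηinf : Filter.Tendsto (fun s => μ s * ‖η s‖ ^ 2) Filter.atTop (nhds 0))
    (hint1 : IntegrableOn (fun s => μ s * inner ℝ (η' s) (η s) : ℝ → ℝ) (Set.Ioi 0))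
    (hint2 : IntegrableOn (fun s => deriv μ s * ‖η s‖ ^ 2) (Set.Ioi 0)) :
    2 * (∫ s in Set.Ioi (0:ℝ), μ s * (inner ℝ (-η' s) (η s) : ℝ))
        = ∫ s in Set.Ioi (0:ℝ), deriv μ s * ‖η s‖ ^ 2 ∧
    (∫ s in Set.Ioi (0:ℝ), μ s * (inner ℝ (-η' s) (η s) : ℝ)) ≤ 0 :=
  stmt_18_general μ hμnn hμdec hμAC η η' hη' hη0 hηinf hint1 hint2
end
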